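/- For every t ≥ 0, the set complex_{Q,t} = {x ∈ X_Q* : δ_Q(x) > t} is immune, that is, it is infinite and contains no infinite computably enumerable subset. In particular, every computably enumerable set A ⊆ X_Q* with A ⊆ {x : δ_Q(x) > t} is finite. -/

import Mathlib

open scoped ENNReal

/-- Strings over a `Q`-letter alphabet `X_Q`. -/
abbrev Str (Q : ℕ) : Type := List (Fin Q)

/-- A set of strings is prefix-free if no element is a proper prefix of another. -/
def PrefixFreeSet {Q : ℕ} (S : Set (Str Q)) : Prop :=
  ∀ x ∈ S, ∀ y ∈ S, x <+: y → x = y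

/-- A self-delimiting machine: a partial computable function on `X_Q`-strings
whose domain (program set) is prefix-free. -/
structure SDMachine (Q : ℕ) where
  f : Str Q →. Str Q
  partrec : Partrec f
  prefixFree : PrefixFreeSet f.Dom

/-- Program-size complexity `H_T(x) = min {|y| : T(y) = x}`, with `min ∅ = ∞`. -/
noncomputable def Hm {Q : ℕ} (T : SDMachine Q) (x : Str Q) : ℕ∞ :=
  sInf ((fun y : Str Q => (y.length : ℕ∞)) '' {y | x ∈ T.f y})

/-- `U` is a universal self-delimiting machine: for every self-delimiting machine `T`
there is a constant `ε > 0` with `H_U(x) ≤ H_T(x) + ε` for all `x`. -/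
def IsUniversal {Q : ℕ} (U : SDMachine Q) : Prop :=
  ∀ T : SDMachine Q, ∃ ε : ℕ, 0 < ε ∧ ∀ x, Hm U x ≤ Hm T x + (ε : ℕ∞)

/-- δ-complexity `δ(x) = H(x) − |x|`.  (For a universal machine `U`, `Hm U x` is
always finite, so taking `toNat` is harmless.) -/
noncomputable def deltaC {Q : ℕ} (U : SDMachine Q) (x : Str Q) : ℤ :=
  ((Hm U x).toNat : ℤ) - (x.length : ℤ)

/-- A set is computably enumerable if it is the domain of a partial computable function. -/
def CEset {α : Type} [Primcodable α] (S : Set α) : Prop :=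
  ∃ f : α →. Unit, Partrec f ∧ f.Dom = S

/-- An immune set: infinite, but containing no infinite c.e. subset. -/
def Immune {α : Type} [Primcodable α] (S : Set α) : Prop :=
  S.Infinite ∧ ∀ A : Set α, A ⊆ S → CEset A → A.Finite

/-!
If every string longer than `L` had `δ(x) ≤ t`, the minimal programs of the strings of lengths
`L + 1, …, L + Qᵗ + 1` would form a prefix-free code with Kraft sum at least
`(Qᵗ + 1) · Q⁻ᵗ > 1`; so `complex_{Q,t}` is infinite.

Immunity is Berry's paradox: from an infinite c.e. `A ⊆ complex_{Q,t}` one builds a machine that on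
input `0ⁿ1` searches `A` for a string of length at least `2n`. By universality that string `x`
satisfies `H(x) ≤ n + c` for a constant `c`, and for `n = c` this gives `H(x) ≤ |x|`,
i.e. `δ(x) ≤ 0`.
-/

theorem PrefixFreeSet.uniquelyDecodable {Q : ℕ} {S : Set (Str Q)} (hS : PrefixFreeSet S)
    (hnil : [] ∉ S) : InformationTheory.UniquelyDecodable S := by
  intro L₁ L₂ h₁ h₂ hflat
  induction L₁ generalizing L₂ with
  | nil =>
    cases L₂ with
    | nil => rfl
    | cons w L₂ =>
      exact (hnil ((List.append_eq_nil_iff.1 hflat.symm).1 ▸ h₂ w List.mem_cons_self)).elim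
  | cons v L₁ ih =>
    cases L₂ with
    | nil => exact (hnil ((List.append_eq_nil_iff.1 hflat).1 ▸ h₁ v List.mem_cons_self)).elim
    | cons w L₂ =>
      simp only [List.flatten_cons] at hflat
      have hv := h₁ v List.mem_cons_self
      have hw := h₂ w List.mem_cons_self
      have hvw : v = w := by
        rcases List.prefix_or_prefix_of_prefix ⟨_, hflat⟩ ⟨_, rfl⟩ with h | h
        · exact hS v hv w hw h
        · exact (hS w hw v hv h).symm
      subst hvw
      rw [ih L₂ (fun x hx => h₁ x (List.mem_cons_of_mem _ hx))
        (fun x hx => h₂ x (List.mem_cons_of_mem _ hx)) (List.append_cancel_left hflat)]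

theorem PrefixFreeSet.sum_one_div_pow_length_le_one {Q : ℕ} (hQ : 0 < Q) {S : Finset (Str Q)}
    (hS : PrefixFreeSet (S : Set (Str Q))) : ∑ w ∈ S, (1 / Q : ℝ) ^ w.length ≤ 1 := by
  by_cases hnil : [] ∈ S
  -- `{[]}` is prefix-free but not uniquely decodable.
  · have hS_eq : S = {[]} := Finset.eq_singleton_iff_unique_mem.2
      ⟨hnil, fun w hw => (hS [] hnil w hw List.nil_prefix).symm⟩
    simp [hS_eq]
  · have : NeZero Q := ⟨hQ.ne'⟩
    simpa using InformationTheory.kraft_mcmillan_inequality (hS.uniquelyDecodable hnil)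

def wordsOfLength (Q k : ℕ) : Finset (Str Q) :=
  (Finset.univ : Finset (List.Vector (Fin Q) k)).map
    ⟨List.Vector.toList, List.Vector.toList_injective⟩

theorem mem_wordsOfLength {Q k : ℕ} {x : Str Q} : x ∈ wordsOfLength Q k ↔ x.length = k := by
  simp only [wordsOfLength, Finset.mem_map, Finset.mem_univ, true_and,
    Function.Embedding.coeFn_mk]
  exact ⟨fun ⟨v, hv⟩ => hv ▸ v.toList_length, fun h => ⟨⟨x, h⟩, rfl⟩⟩

theorem card_wordsOfLength (Q k : ℕ) : (wordsOfLength Q k).card = Q ^ k := by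
  simp [wordsOfLength, card_vector]

theorem sum_wordsOfLength_one_div_pow {Q : ℕ} (hQ : 0 < Q) (k t : ℕ) :
    ∑ x ∈ wordsOfLength Q k, (1 / Q : ℝ) ^ (x.length + t) = (1 / Q : ℝ) ^ t := by
  rw [Finset.sum_congr rfl fun x hx => by rw [mem_wordsOfLength.1 hx], Finset.sum_const,
    card_wordsOfLength, nsmul_eq_mul, pow_add]
  push_cast
  rw [← mul_assoc, ← mul_pow, mul_one_div_cancel (by positivity), one_pow, one_mul]

theorem PrefixFreeSet.exists_length_add_lt_of_injOn {Q : ℕ} (hQ : 0 < Q) {P : Set (Str Q)}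
    (hP : PrefixFreeSet P) {p : Str Q → Str Q} {L : ℕ} (hp : Set.InjOn p {x | L < x.length})
    (hpP : ∀ x, L < x.length → p x ∈ P) (t : ℕ) :
    ∃ x, L < x.length ∧ x.length + t < (p x).length := by
  by_contra! hshort
  set q : ℝ := 1 / Q
  have hq₀ : 0 ≤ q := by positivity
  have hq₁ : q ≤ 1 := div_le_one_of_le₀ (by exact_mod_cast hQ) (by positivity)
  set F := (Finset.Ioc L (L + (Q ^ t + 1))).biUnion (wordsOfLength Q)
  have hF : ∀ x ∈ F, L < x.length := by
    intro x hx
    obtain ⟨k, hk, hx⟩ := Finset.mem_biUnion.1 hx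
    exact (mem_wordsOfLength.1 hx).symm ▸ (Finset.mem_Ioc.1 hk).1
  have hkraft : ∑ x ∈ F, q ^ (p x).length ≤ 1 := by
    rw [← Finset.sum_image (f := fun w => q ^ w.length) fun x hx y hy => hp (hF x hx) (hF y hy)]
    have himage : ∀ w ∈ F.image p, w ∈ P := by
      simp only [Finset.mem_image]
      rintro _ ⟨x, hx, rfl⟩
      exact hpP x (hF x hx)
    exact sum_one_div_pow_length_le_one hQ fun u hu v hv => hP u (himage u hu) v (himage v hv)
  have hcount : ∑ x ∈ F, q ^ (x.length + t) = (Q ^ t + 1 : ℕ) * q ^ t := by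
    rw [Finset.sum_biUnion fun i _ j _ hij => Finset.disjoint_left.2 fun x hi hj =>
      hij ((mem_wordsOfLength.1 hi).symm.trans (mem_wordsOfLength.1 hj))]
    rw [Finset.sum_congr rfl fun k _ => sum_wordsOfLength_one_div_pow hQ k t, Finset.sum_const,
      Nat.card_Ioc, Nat.add_sub_cancel_left, nsmul_eq_mul]
  have hlower : ∑ x ∈ F, q ^ (x.length + t) ≤ ∑ x ∈ F, q ^ (p x).length :=
    Finset.sum_le_sum fun x hx => pow_le_pow_of_le_one hq₀ hq₁ (hshort x (hF x hx))
  have hgt_one : (Q ^ t + 1 : ℕ) * q ^ t = 1 + q ^ t := by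
    push_cast
    rw [add_mul, ← mul_pow, mul_one_div_cancel (by positivity), one_pow, one_mul]
  linarith [pow_pos (show 0 < q by positivity) t]

theorem Hm_le_length {Q : ℕ} {T : SDMachine Q} {x y : Str Q} (h : x ∈ T.f y) :
    Hm T x ≤ y.length :=
  sInf_le ⟨y, h, rfl⟩

theorem Hm_le_iff {Q : ℕ} {T : SDMachine Q} {x : Str Q} {n : ℕ} :
    Hm T x ≤ n ↔ ∃ y, x ∈ T.f y ∧ y.length ≤ n := by
  refine ⟨fun h => ?_, fun ⟨y, hy, hn⟩ => (Hm_le_length hy).trans (by exact_mod_cast hn)⟩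
  have hne : ((fun y : Str Q => (y.length : ℕ∞)) '' {y | x ∈ T.f y}).Nonempty := by
    by_contra hempty
    simp [Hm, Set.not_nonempty_iff_eq_empty.1 hempty] at h
  obtain ⟨y, hy, hlen⟩ := csInf_mem hne
  exact ⟨y, hy, ENat.natCast_le_natCast.1 (hlen.trans_le h)⟩

theorem SDMachine.exists_length_add_lt_Hm {Q : ℕ} (hQ : 0 < Q) (T : SDMachine Q) (L t : ℕ) :
    ∃ x : Str Q, L < x.length ∧ ((x.length + t : ℕ) : ℕ∞) < Hm T x := by
  by_contra! hcompressible
  have hprog : ∀ x, ∃ y, L < x.length → x ∈ T.f y ∧ y.length ≤ x.length + t := fun x => by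
    by_cases hx : L < x.length
    · obtain ⟨y, hy⟩ := Hm_le_iff.1 (hcompressible x hx)
      exact ⟨y, fun _ => hy⟩
    · exact ⟨[], fun h => absurd h hx⟩
  choose p hp using hprog
  obtain ⟨x, hx, hlong⟩ := T.prefixFree.exists_length_add_lt_of_injOn hQ
    (fun x hx y hy (hxy : p x = p y) => Part.mem_unique (hp x hx).1 (hxy ▸ (hp y hy).1))
    (fun x hx => (PFun.mem_dom _ _).2 ⟨x, (hp x hx).1⟩) t
  exact (hp x hx).2.not_gt hlong

theorem SDMachine.infinite_setOf_length_add_lt_Hm {Q : ℕ} (hQ : 0 < Q) (T : SDMachine Q)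
    (t : ℕ) : {x : Str Q | ((x.length + t : ℕ) : ℕ∞) < Hm T x}.Infinite := by
  refine Set.Infinite.of_image List.length
    (Set.infinite_of_not_bddAbove (not_bddAbove_iff.2 fun L => ?_))
  obtain ⟨x, hxL, hx⟩ := T.exists_length_add_lt_Hm hQ L t
  exact ⟨x.length, ⟨x, hx, rfl⟩, hxL⟩

section UnaryCode

variable {Q : ℕ} (hQ : 2 ≤ Q)

def unaryCode : ℕ → Str Q
  | 0 => [⟨1, hQ⟩]
  | n + 1 => ⟨0, by omega⟩ :: unaryCode n

theorem length_unaryCode (n : ℕ) : (unaryCode hQ n).length = n + 1 := by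
  induction n <;> simp [unaryCode, *]

theorem eq_of_unaryCode_prefix {n m : ℕ} (h : unaryCode hQ n <+: unaryCode hQ m) : n = m := by
  induction n generalizing m with
  | zero =>
    cases m with
    | zero => rfl
    | succ m => simp [unaryCode] at h
  | succ n ih =>
    cases m with
    | zero => simpa [length_unaryCode] using h.length_le
    | succ m => exact congrArg _ (ih (List.cons_prefix_cons.1 h).2)

theorem primrec_unaryCode : Primrec (unaryCode hQ) :=
  (Primrec.nat_rec₁ (f := fun _ l => (⟨0, by omega⟩ : Fin Q) :: l) [⟨1, hQ⟩]
    (Primrec.list_cons.comp (Primrec.const _) Primrec.snd)).of_eq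
      fun n => by induction n <;> simp [unaryCode, *]

end UnaryCode

def unaryMachine {Q : ℕ} (hQ : 2 ≤ Q) (g : ℕ →. Str Q) (hg : Partrec g) : SDMachine Q where
  f s := bif decide (s = unaryCode hQ (s.length - 1)) then g (s.length - 1) else Part.none
  partrec := by
    have hn : Primrec fun s : Str Q => s.length - 1 :=
      Primrec.nat_sub.comp Primrec.list_length (Primrec.const 1)
    exact Partrec.cond
      (Primrec.eq.comp Primrec.id ((primrec_unaryCode hQ).comp hn)).decide.to_comp
      (hg.comp hn.to_comp) Partrec.none
  prefixFree := by
    intro a ha b hb hab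
    obtain ⟨ha, hb⟩ : a = unaryCode hQ (a.length - 1) ∧ b = unaryCode hQ (b.length - 1) := by
      constructor <;> by_contra hne <;> simp [hne] at ha hb
    rw [ha, hb] at hab ⊢
    rw [eq_of_unaryCode_prefix hQ hab]

theorem Hm_unaryMachine_le {Q : ℕ} (hQ : 2 ≤ Q) {g : ℕ →. Str Q} (hg : Partrec g) {n : ℕ}
    {x : Str Q} (hx : x ∈ g n) : Hm (unaryMachine hQ g hg) x ≤ (n + 1 : ℕ) := by
  have hrun : x ∈ (unaryMachine hQ g hg).f (unaryCode hQ n) := by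
    simpa [unaryMachine, length_unaryCode] using hx
  simpa [length_unaryCode] using Hm_le_length hrun

theorem IsUniversal.exists_Hm_le_add {Q : ℕ} {U : SDMachine Q} (hU : IsUniversal U)
    (hQ : 2 ≤ Q) {g : ℕ →. Str Q} (hg : Partrec g) :
    ∃ c : ℕ, ∀ n x, x ∈ g n → Hm U x ≤ (n + c : ℕ) := by
  obtain ⟨ε, -, hε⟩ := hU (unaryMachine hQ g hg)
  refine ⟨ε + 1, fun n x hx => (hε x).trans ?_⟩
  calc Hm (unaryMachine hQ g hg) x + ε ≤ (n + 1 : ℕ) + ε := by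
        gcongr; exact Hm_unaryMachine_le hQ hg hx
    _ = (n + (ε + 1) : ℕ) := by push_cast; ring

theorem IsUniversal.Hm_lt_top {Q : ℕ} {U : SDMachine Q} (hU : IsUniversal U) (hQ : 2 ≤ Q)
    (x : Str Q) : Hm U x < ⊤ := by
  obtain ⟨c, hc⟩ := hU.exists_Hm_le_add hQ (Partrec.const' (Part.some x) : Partrec fun _ : ℕ => _)
  exact (hc 0 x (Part.mem_some x)).trans_lt (ENat.natCast_lt_top _)

theorem IsUniversal.lt_deltaC_iff {Q : ℕ} {U : SDMachine Q} (hU : IsUniversal U) (hQ : 2 ≤ Q)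
    {x : Str Q} {t : ℕ} : (t : ℤ) < deltaC U x ↔ ((x.length + t : ℕ) : ℕ∞) < Hm U x := by
  obtain ⟨h, hh⟩ := ENat.ne_top_iff_exists.1 (hU.Hm_lt_top hQ x).ne
  rw [deltaC, ← hh, ENat.toNat_natCast, Nat.cast_lt]
  omega

open Encodable in
theorem CEset.exists_primrec_witness {α : Type} [Primcodable α] {A : Set α} (hA : CEset A) :
    ∃ R : α → ℕ → Bool, Primrec₂ R ∧ ∀ x, x ∈ A ↔ ∃ k, R x k = true := by
  obtain ⟨f, hf, rfl⟩ := hA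
  obtain ⟨c, hc⟩ := Nat.Partrec.Code.exists_code.1 hf
  refine ⟨fun x k => (c.evaln k (encode x)).isSome,
    Primrec.option_isSome.comp (Nat.Partrec.Code.primrec_evaln.comp
      (((Primrec.snd).pair (Primrec.const c)).pair (Primrec.encode.comp Primrec.fst))),
    fun x => ?_⟩
  have heval : c.eval (encode x) = (f x).map encode := by simp [hc, encodek]
  calc x ∈ f.Dom ↔ (c.eval (encode x)).Dom := by rw [heval]; rfl
    _ ↔ _ := by
      simp only [Part.dom_iff_mem, Nat.Partrec.Code.evaln_complete, Option.isSome_iff_exists,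
        Option.mem_def]
      exact exists_comm

open Encodable in
theorem CEset.exists_partrec_choice {α β : Type} [Primcodable α] [Primcodable β] {A : Set α}
    (hA : CEset A) {P : β → α → Bool} (hP : Computable₂ P) :
    ∃ s : β →. α, Partrec s ∧
      ∀ b, (∀ x ∈ s b, x ∈ A ∧ P b x = true) ∧ ((∃ x ∈ A, P b x = true) → (s b).Dom) := by
  obtain ⟨R, hR, hAR⟩ := hA.exists_primrec_witness
  -- Dovetailing: `m` encodes a candidate `x` together with a number of steps `k`.
  let search : β → ℕ → Option α := fun b m => (decode (α := α × ℕ) m).bind fun xk =>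
    bif P b xk.1 && R xk.1 xk.2 then some xk.1 else none
  have hsearch : Computable₂ search := by
    open Computable in
    refine option_bind (Computable.decode.comp snd) (cond ?_ (option_some.comp (fst.comp snd))
      (const none))
    exact Primrec.and.to_comp.comp (hP.comp (fst.comp fst) (fst.comp snd))
      (hR.to_comp.comp (fst.comp snd) (snd.comp snd))
  refine ⟨fun b => Nat.rfindOpt (search b), Partrec.rfindOpt hsearch, fun b => ⟨?_, ?_⟩⟩
  · intro x hx
    obtain ⟨m, hm⟩ := Nat.rfindOpt_spec hx
    simp only [search, Option.mem_def, Option.bind_eq_some_iff] at hm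
    obtain ⟨⟨y, k⟩, -, hyk⟩ := hm
    cases hb : P b y && R y k
    · simp [hb] at hyk
    · simp only [hb, cond_true, Option.some.injEq] at hyk
      rw [Bool.and_eq_true] at hb
      exact hyk ▸ ⟨(hAR y).2 ⟨k, hb.2⟩, hb.1⟩
  · rintro ⟨x, hxA, hPx⟩
    obtain ⟨k, hk⟩ := (hAR x).1 hxA
    exact Nat.rfindOpt_dom.2 ⟨encode (x, k), x, by simp [search, encodek, hPx, hk]⟩

theorem IsUniversal.finite_of_forall_length_lt_Hm {Q : ℕ} {U : SDMachine Q} (hU : IsUniversal U)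
    (hQ : 2 ≤ Q) {A : Set (Str Q)} (hA : CEset A)
    (hA_complex : ∀ x ∈ A, (x.length : ℕ∞) < Hm U x) : A.Finite := by
  by_contra hinf
  obtain ⟨s, hs, hsA⟩ := hA.exists_partrec_choice (P := fun n x => decide (2 * n ≤ x.length))
    (Primrec.nat_le.comp (Primrec.nat_mul.comp (Primrec.const 2) Primrec.fst)
      (Primrec.list_length.comp Primrec.snd)).decide.to_comp
  obtain ⟨c, hc⟩ := hU.exists_Hm_le_add hQ hs
  have hdom : (s c).Dom := by
    obtain ⟨x, hxA, hx⟩ := Set.Infinite.exists_notMem_finite hinf (List.finite_length_lt _ (2 * c))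
    exact (hsA c).2 ⟨x, hxA, by simpa using hx⟩
  have hx : (s c).get hdom ∈ s c := Part.get_mem hdom
  obtain ⟨hxA, hxlen⟩ := (hsA c).1 _ hx
  have hlt := ENat.natCast_lt_natCast.1 ((hA_complex _ hxA).trans_le (hc c _ hx))
  simp only [decide_eq_true_eq] at hxlen
  omega

/-- For every `t ≥ 0`, the set `complex_{Q,t} = {x ∈ X_Q* : δ_Q(x) > t}` is immune;
in particular every c.e. subset of it is finite. -/
theorem complex_Qt_immune {Q : ℕ} (hQ : 2 ≤ Q) (U : SDMachine Q) (hU : IsUniversal U) (t : ℕ) :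
    Immune {x : Str Q | (t : ℤ) < deltaC U x} ∧
      ∀ A : Set (Str Q), CEset A → A ⊆ {x : Str Q | (t : ℤ) < deltaC U x} → A.Finite := by
  have hcomplex : {x : Str Q | (t : ℤ) < deltaC U x} =
      {x : Str Q | ((x.length + t : ℕ) : ℕ∞) < Hm U x} :=
    Set.ext fun _ => hU.lt_deltaC_iff hQ
  have hfinite : ∀ A : Set (Str Q), CEset A →
      A ⊆ {x : Str Q | (t : ℤ) < deltaC U x} → A.Finite := by
    refine fun A hA hsub => hU.finite_of_forall_length_lt_Hm hQ hA fun x hx => ?_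
    exact lt_of_le_of_lt (by exact_mod_cast Nat.le_add_right _ t)
      ((hU.lt_deltaC_iff hQ).1 (hsub hx))
  refine ⟨⟨?_, fun A hsub hA => hfinite A hA hsub⟩, hfinite⟩
  rw [hcomplex]
  exact U.infinite_setOf_length_add_lt_Hm (by omega) t
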